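/- arXiv:1603.00410 — 7 statements merged into one kernel-verified Lean document; each statement's English description precedes it below -/
import Mathlib

section
/- Let A be a unital C*-algebra, let a ∈ A satisfy a*a ≤ 1, and let e₁, e₂ ∈ A be projections. Then the following four statements are equivalent: (1) a* e₁ a ≤ 1 − e₂; (2) a e₂ a* ≤ 1 − e₁; (3) e₁ a e₂ = 0; (4) e₂ a* e₁ = 0. -/
section aux

variable {A : Type*} [CStarAlgebra A] [PartialOrder A] [StarOrderedRing A]

lemma proj_le_one {e : A} (he : IsSelfAdjoint e ∧ IsIdempotentElem e) : e ≤ 1 := by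
  rw [← sub_nonneg]
  have : (1 - e) = star (1 - e) * (1 - e) := by
    rw [star_sub, star_one, he.1.star_eq]
    rw [mul_sub, sub_mul, sub_mul, he.2.eq]
    simp
  rw [this]
  exact star_mul_self_nonneg _

lemma mul_star_le_one {a : A} (ha : star a * a ≤ 1) : a * star a ≤ 1 := by
  rw [← CStarAlgebra.norm_le_one_iff_of_nonneg _ (mul_star_self_nonneg a)]
  rw [← CStarAlgebra.norm_le_one_iff_of_nonneg _ (star_mul_self_nonneg a)] at ha
  rwa [CStarRing.norm_self_mul_star, ← CStarRing.norm_star_mul_self]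

lemma key_forward {a e₁ e₂ : A} (ha : star a * a ≤ 1)
    (he₁ : IsSelfAdjoint e₁ ∧ IsIdempotentElem e₁)
    (he₂ : IsSelfAdjoint e₂ ∧ IsIdempotentElem e₂)
    (h : e₁ * a * e₂ = 0) : star a * e₁ * a ≤ 1 - e₂ := by
  have h1 : e₁ * a = e₁ * a * (1 - e₂) := by rw [mul_sub, h, mul_one, sub_zero]
  have key : star a * e₁ * a = star (e₁ * a) * (e₁ * a) := by
    rw [star_mul, he₁.1.star_eq, mul_assoc (star a) e₁ (e₁ * a), ← mul_assoc e₁ e₁, he₁.2.eq, ← mul_assoc]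
  have h2 : star a * e₁ * a = star (1 - e₂) * (star a * e₁ * a) * (1 - e₂) := by
    calc star a * e₁ * a = star (e₁ * a) * (e₁ * a) := key
      _ = star (e₁ * a * (1 - e₂)) * (e₁ * a * (1 - e₂)) := by rw [← h1]
      _ = star (1 - e₂) * (star (e₁ * a) * (e₁ * a)) * (1 - e₂) := by
          simp [star_mul, mul_assoc]
      _ = star (1 - e₂) * (star a * e₁ * a) * (1 - e₂) := by rw [← key]
  have h3 : star a * e₁ * a ≤ 1 := by
    calc star a * e₁ * a ≤ star a * 1 * a :=
          star_left_conjugate_le_conjugate (proj_le_one he₁) a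
    _ = star a * a := by rw [mul_one]
    _ ≤ 1 := ha
  calc star a * e₁ * a = star (1 - e₂) * (star a * e₁ * a) * (1 - e₂) := h2
    _ ≤ star (1 - e₂) * 1 * (1 - e₂) := star_left_conjugate_le_conjugate h3 _
    _ = 1 - e₂ := by
        rw [mul_one, star_sub, star_one, he₂.1.star_eq, mul_sub, sub_mul, sub_mul, he₂.2.eq]
        simp

lemma key_backward {a e₁ e₂ : A}
    (he₁ : IsSelfAdjoint e₁ ∧ IsIdempotentElem e₁)
    (he₂ : IsSelfAdjoint e₂ ∧ IsIdempotentElem e₂)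
    (h : star a * e₁ * a ≤ 1 - e₂) : e₁ * a * e₂ = 0 := by
  have h1 : e₂ * (star a * e₁ * a) * e₂ ≤ e₂ * (1 - e₂) * e₂ := by
    exact he₂.1.conjugate_le_conjugate h
  have h2 : e₂ * (1 - e₂) * e₂ = 0 := by
    rw [mul_sub, mul_one, he₂.2.eq, sub_self, zero_mul]
  have h3 : star (e₁ * a * e₂) * (e₁ * a * e₂) = e₂ * (star a * e₁ * a) * e₂ := by
    simp only [star_mul, he₁.1.star_eq, he₂.1.star_eq, mul_assoc]
    rw [← mul_assoc e₁ e₁, he₁.2.eq]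
  have h4 : star (e₁ * a * e₂) * (e₁ * a * e₂) = 0 := by
    have hle : star (e₁ * a * e₂) * (e₁ * a * e₂) ≤ 0 := by rw [h3, ← h2]; exact h1
    exact le_antisymm hle (star_mul_self_nonneg _)
  exact (CStarRing.star_mul_self_eq_zero_iff _).mp h4

end aux

/-- In a unital C*-algebra, for `a` with `a* a ≤ 1` and projections `e₁, e₂`,
the following are equivalent:
(1) `a* e₁ a ≤ 1 - e₂`; (2) `a e₂ a* ≤ 1 - e₁`; (3) `e₁ a e₂ = 0`; (4) `e₂ a* e₁ = 0`. -/
theorem stmt_1 {A : Type*} [CStarAlgebra A] [PartialOrder A] [StarOrderedRing A]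
    (a e₁ e₂ : A) (ha : star a * a ≤ 1)
    (he₁ : IsSelfAdjoint e₁ ∧ IsIdempotentElem e₁)
    (he₂ : IsSelfAdjoint e₂ ∧ IsIdempotentElem e₂) :
    List.TFAE
      [ star a * e₁ * a ≤ 1 - e₂,
        a * e₂ * star a ≤ 1 - e₁,
        e₁ * a * e₂ = 0,
        e₂ * star a * e₁ = 0 ] := by
  have ha' : star (star a) * star a ≤ 1 := by rw [star_star]; exact mul_star_le_one ha
  have h34 : e₁ * a * e₂ = 0 ↔ e₂ * star a * e₁ = 0 := by
    constructor
    · intro h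
      have := congrArg star h
      simpa [star_mul, he₁.1.star_eq, he₂.1.star_eq, mul_assoc] using this
    · intro h
      have := congrArg star h
      simpa [star_mul, he₁.1.star_eq, he₂.1.star_eq, mul_assoc] using this
  tfae_have 3 → 1 := key_forward ha he₁ he₂
  tfae_have 1 → 3 := key_backward he₁ he₂
  tfae_have 3 → 4 := h34.mp
  tfae_have 4 → 3 := h34.mpr
  tfae_have 4 → 2 := by
    intro h
    have := key_forward ha' he₂ he₁ h
    rwa [star_star] at this
  tfae_have 2 → 4 := by
    intro h
    exact key_backward he₂ he₁ (by rwa [star_star])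
  tfae_finish
end

section
/- Let A be a unital C*-algebra and let p ∈ A satisfy 0 ≤ p ≤ 1. Then p is a projection if and only if the only positive element a ∈ A with a ≤ p and a ≤ 1 − p is a = 0. -/
/-!
If `p` is a projection and `0 ≤ a`, then `a ≤ p` forces `a * p = a` while `a ≤ 1 - p` forces
`a * (1 - p) = a`, so `a = 0`. Conversely, the defect `p - p * p` is positive because `p ≤ 1`,
lies below `p` because `p * p = star p * p ≥ 0`, and below `1 - p` because
`(1 - p) - (p - p * p) = star (1 - p) * (1 - p)`; hence it vanishes.
-/

section StarOrderedRing

variable {R : Type*} [Ring R] [StarRing R] [PartialOrder R] [StarOrderedRing R]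
  {p : R}

lemma IsSelfAdjoint.sub_mul_self_le_self (hp : IsSelfAdjoint p) : p - p * p ≤ p := by
  simpa [hp.star_eq] using star_mul_self_nonneg p

lemma IsSelfAdjoint.sub_mul_self_le_one_sub (hp : IsSelfAdjoint p) :
    p - p * p ≤ 1 - p := by
  rw [← sub_nonneg]
  convert star_mul_self_nonneg (1 - p) using 1
  rw [star_sub, star_one, hp.star_eq]
  noncomm_ring

end StarOrderedRing

section CStarAlgebra

variable {A : Type*} [CStarAlgebra A] [PartialOrder A] [StarOrderedRing A] {a p : A}

lemma CStarAlgebra.mul_self_le_self (h0 : 0 ≤ p) (h1 : p ≤ 1) : p * p ≤ p := by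
  simpa [sq] using CStarAlgebra.pow_antitone h0 h1 one_le_two

lemma IsStarProjection.eq_zero_of_le_of_le_one_sub (hp : IsStarProjection p) (ha : 0 ≤ a)
    (hap : a ≤ p) (ha1p : a ≤ 1 - p) : a = 0 := by
  have hfix : a * p = a := (hp.mul_right_and_mul_left_of_nonneg_of_le ha hap).1
  have hkill : a * (1 - p) = a := (hp.one_sub.mul_right_and_mul_left_of_nonneg_of_le ha ha1p).1
  rwa [mul_sub, mul_one, hfix, sub_self, eq_comm] at hkill

end CStarAlgebra

/-- For `0 ≤ p ≤ 1` in a unital C*-algebra, `p` is a projection if and only if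
the only positive element `a` with `a ≤ p` and `a ≤ 1 - p` is `a = 0`. -/
theorem stmt_5 {A : Type*} [CStarAlgebra A] [PartialOrder A] [StarOrderedRing A]
    (p : A) (h0 : 0 ≤ p) (h1 : p ≤ 1) :
    (IsSelfAdjoint p ∧ IsIdempotentElem p) ↔
      ∀ a : A, 0 ≤ a → a ≤ p → a ≤ 1 - p → a = 0 := by
  constructor
  · rintro ⟨hsa, hidem⟩ a ha hap ha1p
    exact IsStarProjection.eq_zero_of_le_of_le_one_sub ⟨hidem, hsa⟩ ha hap ha1p
  · intro h
    have hsa : IsSelfAdjoint p := .of_nonneg h0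
    have hdefect : p - p * p = 0 :=
      h _ (sub_nonneg.mpr (CStarAlgebra.mul_self_le_self h0 h1))
        hsa.sub_mul_self_le_self hsa.sub_mul_self_le_one_sub
    exact ⟨hsa, (sub_eq_zero.mp hdefect).symm⟩
end

section
/- Let A and B be unital C*-algebras and let f : A → B be a bijective linear map with f(1) = 1 such that both f and its inverse f⁻¹ map positive elements to positive elements. Then f maps projections to projections: if p ∈ A satisfies p* = p and p² = p, then f(p)* = f(p) and f(p)² = f(p). -/
/-!
Star projections of a unital C⋆-algebra can be recognised from the order and the unit alone:
`p` is a star projection iff `0 ≤ p ≤ 1` and `0` is the only positive element lying below both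
`p` and `1 - p`. A surjective unital linear map that preserves and reflects positivity is an
order isomorphism fixing `1`, so it preserves this description.
-/

def IsOrderProjection {M : Type*} [AddGroupWithOne M] [LE M] (p : M) : Prop :=
  0 ≤ p ∧ p ≤ 1 ∧ ∀ q, 0 ≤ q → q ≤ p → q ≤ 1 - p → q = 0

theorem IsOrderProjection.map {M N : Type*} [AddCommGroupWithOne M] [PartialOrder M]
    [IsOrderedAddMonoid M] [AddCommGroupWithOne N] [PartialOrder N] [IsOrderedAddMonoid N]
    {p : M} (hp : IsOrderProjection p) (f : M →+ N) (hone : f 1 = 1)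
    (hf : ∀ a, 0 ≤ f a ↔ 0 ≤ a) (hsurj : Function.Surjective f) :
    IsOrderProjection (f p) := by
  have hle : ∀ a b, f a ≤ f b ↔ a ≤ b := fun a b => by
    rw [← sub_nonneg, ← map_sub, hf, sub_nonneg]
  obtain ⟨hp0, hp1, hdisj⟩ := hp
  refine ⟨(hf p).mpr hp0, by rwa [← hone, hle], ?_⟩
  intro q hq hqp hq1p
  obtain ⟨a, rfl⟩ := hsurj q
  rw [← hone, ← map_sub, hle] at hq1p
  rw [hdisj a ((hf a).mp hq) ((hle a p).mp hqp) hq1p, map_zero]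

theorem isStarProjection_iff_isOrderProjection {A : Type*} [CStarAlgebra A] [PartialOrder A]
    [StarOrderedRing A] {p : A} : IsStarProjection p ↔ IsOrderProjection p := by
  constructor
  · intro hp
    refine ⟨hp.nonneg, hp.le_one, fun q hq hqp hq1p => ?_⟩
    have hqp_eq : q * p = q := (hp.mul_right_and_mul_left_of_nonneg_of_le hq hqp).1
    have hq1p_eq : q * (1 - p) = q :=
      (hp.one_sub.mul_right_and_mul_left_of_nonneg_of_le hq hq1p).1
    rwa [mul_sub, mul_one, hqp_eq, sub_self, eq_comm] at hq1p_eq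
  · rintro ⟨hp0, hp1, hdisj⟩
    have hsq_le : p ^ 2 ≤ p ^ 1 := CStarAlgebra.pow_antitone hp0 hp1 one_le_two
    -- `p - p ^ 2` lies below `p` and below `1 - p`, the gap to the latter being `(1 - p) ^ 2`.
    have hgap : p - p ^ 2 = 0 := by
      refine hdisj _ (by simpa using hsq_le) (sub_le_self _ (CStarAlgebra.pow_nonneg hp0 2)) ?_
      have : 0 ≤ (1 - p) ^ 2 := CStarAlgebra.pow_nonneg (sub_nonneg.mpr hp1) 2
      rw [← sub_nonneg]
      convert this using 1
      noncomm_ring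
    refine ⟨?_, IsSelfAdjoint.of_nonneg hp0⟩
    rw [IsIdempotentElem, ← sq]
    exact (sub_eq_zero.mp hgap).symm

/-- A bijective unital linear map between unital C*-algebras which is positive and has
a positive inverse maps projections to projections. -/
theorem stmt_6 {A B : Type*} [CStarAlgebra A] [PartialOrder A] [StarOrderedRing A]
    [CStarAlgebra B] [PartialOrder B] [StarOrderedRing B]
    (f : A →ₗ[ℂ] B) (hbij : Function.Bijective f) (hone : f 1 = 1)
    (hpos : ∀ a : A, 0 ≤ a → 0 ≤ f a)
    (hpos' : ∀ a : A, 0 ≤ f a → 0 ≤ a)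
    (p : A) (hsa : star p = p) (hidem : p * p = p) :
    star (f p) = f p ∧ f p * f p = f p := by
  have hp : IsOrderProjection p := isStarProjection_iff_isOrderProjection.mp ⟨hidem, hsa⟩
  have hfp : IsStarProjection (f p) := isStarProjection_iff_isOrderProjection.mpr <|
    hp.map f.toAddMonoidHom hone (fun a => ⟨hpos' a, hpos a⟩) hbij.surjective
  exact ⟨hfp.isSelfAdjoint, hfp.isIdempotentElem⟩
end

section
/- Let H be a complex Hilbert space and let P, Q, A be bounded operators on H with P and Q self-adjoint. Then the following are equivalent: (1) for all x, y ∈ H, 0 ≤ re⟪x, P x⟫ + re⟪y, Q y⟫ + 2·re⟪x, A y⟫ (i.e. the block operator matrix [[P, A], [A*, Q]] on H ⊕ H is positive); (2) P and Q are positive operators and for all x, y ∈ H one has |⟪x, A y⟫|² ≤ re⟪x, P x⟫ · re⟪y, Q y⟫. -/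
/-!
Testing the form at `(s • x, t • y)` reduces the positivity of `[[P, A], [A*, Q]]` to that of
the scalar `2 × 2` Hermitian matrices `[[⟪x, P x⟫, ⟪x, A y⟫], [conj ⟪x, A y⟫, ⟪y, Q y⟫]]`, which
is the nonnegativity of their diagonal and determinant.
-/

open scoped InnerProductSpace ComplexConjugate
open RCLike

section

variable {𝕜 : Type*} [RCLike 𝕜]

theorem nonneg_and_normSq_le_mul_of_forall_nonneg {p q : ℝ} {c : 𝕜}
    (h : ∀ s t : 𝕜, 0 ≤ ‖s‖ ^ 2 * p + ‖t‖ ^ 2 * q + 2 * re (conj s * t * c)) :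
    0 ≤ p ∧ 0 ≤ q ∧ ‖c‖ ^ 2 ≤ p * q := by
  have hp : 0 ≤ p := by simpa using h 1 0
  have hq : 0 ≤ q := by simpa using h 0 1
  -- `(s, t) = (r, -conj c)` turns the form into a real quadratic in `r`
  have hquad : ∀ r : ℝ, 0 ≤ p * (r * r) + (-2 * ‖c‖ ^ 2) * r + ‖c‖ ^ 2 * q := by
    intro r
    have hconj : conj (r : 𝕜) * -conj c * c = -((r * ‖c‖ ^ 2 : ℝ) : 𝕜) := by
      rw [conj_ofReal, mul_assoc, neg_mul, RCLike.conj_mul, ofReal_mul, ofReal_pow, mul_neg]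
    have := h r (-conj c)
    rw [hconj, norm_neg, RCLike.norm_conj, map_neg, ofReal_re, norm_ofReal] at this
    nlinarith [sq_abs r]
  have hdisc := discrim_le_zero hquad
  rw [discrim] at hdisc
  exact ⟨hp, hq, by nlinarith [mul_nonneg hp hq, sq_nonneg ‖c‖]⟩

theorem nonneg_of_normSq_le_mul {p q : ℝ} {c : 𝕜} (hp : 0 ≤ p) (hq : 0 ≤ q)
    (hc : ‖c‖ ^ 2 ≤ p * q) (s t : 𝕜) :
    0 ≤ ‖s‖ ^ 2 * p + ‖t‖ ^ 2 * q + 2 * re (conj s * t * c) := by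
  have hre : -(‖s‖ * ‖t‖ * ‖c‖) ≤ re (conj s * t * c) := by
    have := neg_abs_le (re (conj s * t * c))
    have := abs_re_le_norm (conj s * t * c)
    simp only [norm_mul, RCLike.norm_conj] at this
    linarith
  have ha : 0 ≤ ‖s‖ ^ 2 * p + ‖t‖ ^ 2 * q := by positivity
  have hsq : (2 * (‖s‖ * ‖t‖ * ‖c‖)) ^ 2 ≤ (‖s‖ ^ 2 * p + ‖t‖ ^ 2 * q) ^ 2 := by
    nlinarith [sq_nonneg (‖s‖ ^ 2 * p - ‖t‖ ^ 2 * q), mul_le_mul_of_nonneg_left hc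
      (sq_nonneg (‖s‖ * ‖t‖))]
  nlinarith [abs_le_of_sq_le_sq' hsq ha]

end

section

variable {𝕜 H : Type*} [RCLike 𝕜] [NormedAddCommGroup H] [InnerProductSpace 𝕜 H]

theorem inner_smul_map_smul (T : H →L[𝕜] H) (s t : 𝕜) (x y : H) :
    ⟪s • x, T (t • y)⟫_𝕜 = conj s * t * ⟪x, T y⟫_𝕜 := by
  rw [map_smul, inner_smul_left, inner_smul_right, mul_assoc]

theorem re_inner_smul_map_smul_self (T : H →L[𝕜] H) (s : 𝕜) (x : H) :
    re ⟪s • x, T (s • x)⟫_𝕜 = ‖s‖ ^ 2 * re ⟪x, T x⟫_𝕜 := by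
  rw [inner_smul_map_smul, RCLike.conj_mul, ← ofReal_pow, re_ofReal_mul]

theorem IsSelfAdjoint.isPositive_iff_re_inner_nonneg [CompleteSpace H] {T : H →L[𝕜] H}
    (hT : IsSelfAdjoint T) : T.IsPositive ↔ ∀ x, 0 ≤ re ⟪x, T x⟫_𝕜 :=
  ⟨fun h => h.re_inner_nonneg_right, fun h => ⟨hT.isSymmetric, fun x => by
    simpa [ContinuousLinearMap.reApplyInnerSelf, inner_re_symm] using h x⟩⟩

theorem forall_re_inner_add_nonneg_iff_forall_smul (P Q A : H →L[𝕜] H) :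
    (∀ x y : H, 0 ≤ re ⟪x, P x⟫_𝕜 + re ⟪y, Q y⟫_𝕜 + 2 * re ⟪x, A y⟫_𝕜) ↔
      ∀ x y : H, ∀ s t : 𝕜, 0 ≤ ‖s‖ ^ 2 * re ⟪x, P x⟫_𝕜 + ‖t‖ ^ 2 * re ⟪y, Q y⟫_𝕜 +
        2 * re (conj s * t * ⟪x, A y⟫_𝕜) := by
  refine ⟨fun h x y s t => ?_, fun h x y => by simpa using h x y 1 1⟩
  have := h (s • x) (t • y)
  rwa [re_inner_smul_map_smul_self, re_inner_smul_map_smul_self, inner_smul_map_smul] at this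

theorem forall_re_inner_add_nonneg_iff (P Q A : H →L[𝕜] H) :
    (∀ x y : H, 0 ≤ re ⟪x, P x⟫_𝕜 + re ⟪y, Q y⟫_𝕜 + 2 * re ⟪x, A y⟫_𝕜) ↔
      (∀ x, 0 ≤ re ⟪x, P x⟫_𝕜) ∧ (∀ y, 0 ≤ re ⟪y, Q y⟫_𝕜) ∧
        ∀ x y : H, ‖⟪x, A y⟫_𝕜‖ ^ 2 ≤ re ⟪x, P x⟫_𝕜 * re ⟪y, Q y⟫_𝕜 := by
  rw [forall_re_inner_add_nonneg_iff_forall_smul]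
  constructor
  · intro h
    have hform x y := nonneg_and_normSq_le_mul_of_forall_nonneg (h x y)
    exact ⟨fun x => (hform x 0).1, fun y => (hform 0 y).2.1, fun x y => (hform x y).2.2⟩
  · rintro ⟨hP, hQ, hA⟩ x y
    exact nonneg_of_normSq_le_mul (hP x) (hQ y) (hA x y)

end

open scoped InnerProductSpace in
/-- For self-adjoint bounded operators `P, Q` and a bounded operator `A` on a complex
Hilbert space `H`, the block matrix `[[P, A], [A*, Q]]` is positive (expressed as the
quadratic form condition on `H ⊕ H`) iff `P` and `Q` are positive and
`|⟪x, A y⟫|² ≤ re⟪x, P x⟫ · re⟪y, Q y⟫` for all `x, y`. -/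
theorem stmt_9 {H : Type*} [NormedAddCommGroup H] [InnerProductSpace ℂ H] [CompleteSpace H]
    (P Q A : H →L[ℂ] H) (hP : IsSelfAdjoint P) (hQ : IsSelfAdjoint Q) :
    (∀ x y : H, 0 ≤ (⟪x, P x⟫_ℂ).re + (⟪y, Q y⟫_ℂ).re + 2 * (⟪x, A y⟫_ℂ).re) ↔
      (P.IsPositive ∧ Q.IsPositive ∧
        ∀ x y : H, ‖⟪x, A y⟫_ℂ‖ ^ 2 ≤ (⟪x, P x⟫_ℂ).re * (⟪y, Q y⟫_ℂ).re) := by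
  rw [hP.isPositive_iff_re_inner_nonneg, hQ.isPositive_iff_re_inner_nonneg]
  exact forall_re_inner_add_nonneg_iff P Q A
end

section
/- Let H be a complex Hilbert space and let P, Q, A be bounded operators on H such that P and Q are positive and for all x, y ∈ H one has |⟪x, A y⟫|² ≤ re⟪x, P x⟫ · re⟪y, Q y⟫. Then: (1) A*A ≤ ‖P‖ • Q in the Loewner order; (2) A A* ≤ ‖Q‖ • P in the Loewner order; (3) ‖A‖² ≤ ‖P‖ · ‖Q‖. -/
/-!
Testing the hypothesis against `x = A y` gives `‖A y‖⁴ ≤ ‖P‖ ‖A y‖² re⟪y, Q y⟫`, that is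
`re⟪y, A* A y⟫ ≤ ‖P‖ re⟪y, Q y⟫`, which is the first inequality. The hypothesis is invariant under
`(A, P, Q) ↦ (A*, Q, P)`, which gives the second. The norm bound follows from the first inequality
by the C*-identity `‖A‖² = ‖A* A‖` and monotonicity of the norm on positive operators.
-/

open scoped InnerProductSpace
open RCLike

namespace ContinuousLinearMap

variable {𝕜 E : Type*} [RCLike 𝕜] [NormedAddCommGroup E] [InnerProductSpace 𝕜 E]

lemma re_inner_apply_self_le (T : E →L[𝕜] E) (x : E) : re ⟪x, T x⟫_𝕜 ≤ ‖T‖ * ‖x‖ ^ 2 :=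
  calc re ⟪x, T x⟫_𝕜 ≤ ‖x‖ * ‖T x‖ := re_inner_le_norm _ _
    _ ≤ ‖x‖ * (‖T‖ * ‖x‖) := by gcongr; exact T.le_opNorm x
    _ = ‖T‖ * ‖x‖ ^ 2 := by ring

lemma norm_apply_sq_le_of_norm_inner_sq_le {A P Q : E →L[𝕜] E}
    (hQ : ∀ y, 0 ≤ re ⟪y, Q y⟫_𝕜)
    (h : ∀ x y, ‖⟪x, A y⟫_𝕜‖ ^ 2 ≤ re ⟪x, P x⟫_𝕜 * re ⟪y, Q y⟫_𝕜) (y : E) :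
    ‖A y‖ ^ 2 ≤ ‖P‖ * re ⟪y, Q y⟫_𝕜 := by
  have hsq : (‖A y‖ ^ 2) ^ 2 ≤ (‖P‖ * re ⟪y, Q y⟫_𝕜) * ‖A y‖ ^ 2 :=
    calc (‖A y‖ ^ 2) ^ 2 = ‖⟪A y, A y⟫_𝕜‖ ^ 2 := by
          rw [inner_self_eq_norm_sq_to_K, norm_pow, norm_ofReal, abs_norm]
      _ ≤ re ⟪A y, P (A y)⟫_𝕜 * re ⟪y, Q y⟫_𝕜 := h _ _
      _ ≤ ‖P‖ * ‖A y‖ ^ 2 * re ⟪y, Q y⟫_𝕜 := by gcongr; exacts [hQ y, P.re_inner_apply_self_le _]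
      _ = _ := by ring
  nlinarith [sq_nonneg ‖A y‖, mul_nonneg (norm_nonneg P) (hQ y)]

lemma norm_inner_adjoint_sq_le [CompleteSpace E] {A P Q : E →L[𝕜] E}
    (h : ∀ x y, ‖⟪x, A y⟫_𝕜‖ ^ 2 ≤ re ⟪x, P x⟫_𝕜 * re ⟪y, Q y⟫_𝕜) (x y : E) :
    ‖⟪x, adjoint A y⟫_𝕜‖ ^ 2 ≤ re ⟪x, Q x⟫_𝕜 * re ⟪y, P y⟫_𝕜 := by
  rw [adjoint_inner_right, norm_inner_symm, mul_comm]
  exact h y x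

lemma adjoint_mul_self_le_smul_of_norm_sq_le {H : Type*} [NormedAddCommGroup H]
    [InnerProductSpace ℂ H] [CompleteSpace H] {A Q : H →L[ℂ] H} (hQ : IsSelfAdjoint Q) {c : ℝ}
    (h : ∀ y, ‖A y‖ ^ 2 ≤ c * re ⟪y, Q y⟫_ℂ) :
    adjoint A * A ≤ c • Q := by
  rw [le_def, isPositive_def']
  refine ⟨((IsSelfAdjoint.all c).smul hQ).sub (IsSelfAdjoint.star_mul_self A), fun y => ?_⟩
  have : (c • Q - adjoint A * A).reApplyInnerSelf y = c * re ⟪y, Q y⟫_ℂ - ‖A y‖ ^ 2 := by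
    rw [reApplyInnerSelf_apply, inner_re_symm]
    simp [inner_sub_right, adjoint_inner_right, ← Complex.coe_smul, inner_smul_right,
      ← Complex.ofReal_pow]
  linarith [h y]

end ContinuousLinearMap

open ContinuousLinearMap

open scoped InnerProductSpace in
/-- If `P, Q` are positive bounded operators and `A` a bounded operator on a complex
Hilbert space with `|⟪x, A y⟫|² ≤ re⟪x, P x⟫ · re⟪y, Q y⟫` for all `x, y`, then
`A* A ≤ ‖P‖ • Q`, `A A* ≤ ‖Q‖ • P` (Loewner order) and `‖A‖² ≤ ‖P‖ ‖Q‖`. -/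
theorem stmt_10 {H : Type*} [NormedAddCommGroup H] [InnerProductSpace ℂ H] [CompleteSpace H]
    (P Q A : H →L[ℂ] H) (hP : P.IsPositive) (hQ : Q.IsPositive)
    (h : ∀ x y : H, ‖⟪x, A y⟫_ℂ‖ ^ 2 ≤ (⟪x, P x⟫_ℂ).re * (⟪y, Q y⟫_ℂ).re) :
    ContinuousLinearMap.adjoint A * A ≤ ‖P‖ • Q ∧
      A * ContinuousLinearMap.adjoint A ≤ ‖Q‖ • P ∧
      ‖A‖ ^ 2 ≤ ‖P‖ * ‖Q‖ := by
  have hAA : adjoint A * A ≤ ‖P‖ • Q := adjoint_mul_self_le_smul_of_norm_sq_le hQ.isSelfAdjoint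
    (norm_apply_sq_le_of_norm_inner_sq_le hQ.re_inner_nonneg_right h)
  have hAA' : A * adjoint A ≤ ‖Q‖ • P := by
    simpa only [adjoint_adjoint] using adjoint_mul_self_le_smul_of_norm_sq_le hP.isSelfAdjoint
      (norm_apply_sq_le_of_norm_inner_sq_le hP.re_inner_nonneg_right (norm_inner_adjoint_sq_le h))
  refine ⟨hAA, hAA', ?_⟩
  calc ‖A‖ ^ 2 = ‖adjoint A * A‖ := by rw [sq, ← CStarRing.norm_star_mul_self, star_eq_adjoint]
    _ ≤ ‖‖P‖ • Q‖ := CStarAlgebra.norm_le_norm_of_nonneg_of_le (star_mul_self_nonneg A) hAA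
    _ = ‖P‖ * ‖Q‖ := by rw [norm_smul, norm_norm]
end

section
/- Let A and B be unital C*-algebras and let f : A → B be a 2-positive linear map. Then for all a, b ∈ A: (1) f(b*a) · f(a*b) ≤ ‖f(a*a)‖ • f(b*b); (2) f(a*b) · f(b*a) ≤ ‖f(b*b)‖ • f(a*a); (3) ‖f(a*b)‖² ≤ ‖f(a*a)‖ · ‖f(b*b)‖. -/
/-!
Compressing the positive matrix `[[a*a, a*b], [b*a, b*b]] = [[a, b], [0, 0]]* [[a, b], [0, 0]]`
by the 2-positive map gives a positive matrix `[[x, y], [y*, z]]` over `B`. Evaluating its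
quadratic form at `(-s y, 1)` and bounding `y* x y ≤ ‖x‖ y* y` gives
`(2s - s²‖x‖) y* y ≤ z` for every real `s`; taking `s = 1/t` with `t > ‖x‖` yields
`y* y ≤ t z`, and letting `t ↓ ‖x‖` gives `y* y ≤ ‖x‖ z`, which is inequality (1).
Inequality (2) is (1) with `a` and `b` exchanged, and (3) follows from (1) by taking norms.
-/

open Filter Topology

namespace Matrix

variable {m n R : Type*} [Fintype m] [Fintype n] [NonUnitalRing R] [StarRing R] [PartialOrder R]
  [StarOrderedRing R]

theorem star_dotProduct_conjTranspose_mul_self_mulVec_nonneg (D : Matrix m n R) (w : n → R) :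
    0 ≤ star w ⬝ᵥ ((Dᴴ * D) *ᵥ w) := by
  rw [← mulVec_mulVec, dotProduct_mulVec, ← star_mulVec]
  exact dotProduct_star_self_nonneg _

theorem fin_two_star_mul_self_form_nonneg (D : Matrix (Fin 2) (Fin 2) R) (u v : R) :
    0 ≤ star u * (star D * D) 0 0 * u + star u * (star D * D) 0 1 * v +
      star v * (star D * D) 1 0 * u + star v * (star D * D) 1 1 * v := by
  have := star_dotProduct_conjTranspose_mul_self_mulVec_nonneg D ![u, v]
  simpa only [dotProduct, mulVec, Fin.sum_univ_two, Pi.star_apply, cons_val_zero, cons_val_one,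
    mul_add, mul_assoc, add_assoc, star_eq_conjTranspose] using this

end Matrix

section CStarAlgebra

variable {B : Type*} [CStarAlgebra B] [PartialOrder B] [StarOrderedRing B]

theorem le_smul_of_forall_lt_smul {w z : B} {r : ℝ} (h : ∀ t > r, w ≤ t • z) : w ≤ r • z :=
  ge_of_tendsto ((tendsto_id.mono_left nhdsWithin_le_nhds).smul_const z)
    (eventually_nhdsWithin_of_forall (s := Set.Ioi r) h)

theorem star_mul_self_le_norm_smul_of_form_nonneg {x y z : B}
    (h : ∀ u v : B, 0 ≤ star u * x * u + star u * y * v + star v * star y * u + star v * z * v) :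
    star y * y ≤ ‖x‖ • z := by
  have hx : 0 ≤ x := by simpa using h 1 0
  have hconj : star y * x * y ≤ ‖x‖ • (star y * y) :=
    CStarAlgebra.star_left_conjugate_le_norm_smul (IsSelfAdjoint.of_nonneg hx)
  have hform (s : ℝ) : (2 * s - s ^ 2 * ‖x‖) • (star y * y) ≤ z := by
    have hq : 0 ≤ s ^ 2 • (star y * x * y) - (2 * s) • (star y * y) + z := by
      convert h (-(s • y)) 1 using 1
      simp only [star_neg, star_smul, star_trivial, star_one, neg_mul, mul_neg, one_mul, mul_one,
        smul_mul_assoc, mul_smul_comm]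
      module
    rw [← sub_nonneg]
    calc 0 ≤ s ^ 2 • (star y * x * y) - (2 * s) • (star y * y) + z := hq
      _ ≤ s ^ 2 • (‖x‖ • (star y * y)) - (2 * s) • (star y * y) + z := by gcongr
      _ = z - (2 * s - s ^ 2 * ‖x‖) • (star y * y) := by module
  refine le_smul_of_forall_lt_smul fun t ht => ?_
  have ht0 : 0 < t := (norm_nonneg x).trans_lt ht
  have hcoef : t⁻¹ ≤ 2 * t⁻¹ - t⁻¹ ^ 2 * ‖x‖ := by
    have hdiff : 2 * t⁻¹ - t⁻¹ ^ 2 * ‖x‖ - t⁻¹ = t⁻¹ ^ 2 * (t - ‖x‖) := by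
      field_simp
      ring
    rw [← sub_nonneg, hdiff]
    exact mul_nonneg (sq_nonneg t⁻¹) (sub_nonneg.2 ht.le)
  calc star y * y = t • (t⁻¹ • (star y * y)) := by
        rw [smul_smul, mul_inv_cancel₀ ht0.ne', one_smul]
    _ ≤ t • z := by
      gcongr
      exact (smul_le_smul_of_nonneg_right hcoef (star_mul_self_nonneg y)).trans (hform t⁻¹)

end CStarAlgebra

def IsTwoPositive {A B : Type*} [CStarAlgebra A] [CStarAlgebra B] (f : A →ₗ[ℂ] B) : Prop :=
  ∀ M : Matrix (Fin 2) (Fin 2) A,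
    (∃ C : Matrix (Fin 2) (Fin 2) A, M = star C * C) →
    ∃ D : Matrix (Fin 2) (Fin 2) B, M.map f = star D * D

namespace IsTwoPositive

variable {A B : Type*} [CStarAlgebra A] [CStarAlgebra B] {f : A →ₗ[ℂ] B}

theorem exists_map_gram_eq_star_mul_self (hf : IsTwoPositive f) (a b : A) :
    ∃ D : Matrix (Fin 2) (Fin 2) B,
      !![f (star a * a), f (star a * b); f (star b * a), f (star b * b)] = star D * D := by
  obtain ⟨D, hD⟩ := hf !![star a * a, star a * b; star b * a, star b * b]
    ⟨!![a, b; 0, 0], by ext i j; fin_cases i <;> fin_cases j <;> simp [Matrix.mul_apply]⟩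
  exact ⟨D, by rw [← hD]; ext i j; fin_cases i <;> fin_cases j <;> rfl⟩

theorem map_star_mul_eq_star_map (hf : IsTwoPositive f) (a b : A) :
    f (star b * a) = star (f (star a * b)) := by
  obtain ⟨D, hD⟩ := hf.exists_map_gram_eq_star_mul_self a b
  have h := congrFun₂ (IsSelfAdjoint.star_mul_self D).star_eq 1 0
  rw [← hD] at h
  simpa using h.symm

variable [PartialOrder B] [StarOrderedRing B]

theorem map_mul_map_le_norm_smul (hf : IsTwoPositive f) (a b : A) :
    f (star b * a) * f (star a * b) ≤ ‖f (star a * a)‖ • f (star b * b) := by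
  obtain ⟨D, hD⟩ := hf.exists_map_gram_eq_star_mul_self a b
  rw [hf.map_star_mul_eq_star_map]
  refine star_mul_self_le_norm_smul_of_form_nonneg fun u v => ?_
  have h := D.fin_two_star_mul_self_form_nonneg u v
  rw [← hD] at h
  simpa [hf.map_star_mul_eq_star_map a b] using h

end IsTwoPositive

theorem stmt_11_general {A B : Type*} [CStarAlgebra A]
    [CStarAlgebra B] [PartialOrder B] [StarOrderedRing B]
    (f : A →ₗ[ℂ] B)
    (h2pos : ∀ M : Matrix (Fin 2) (Fin 2) A,
      (∃ C : Matrix (Fin 2) (Fin 2) A, M = star C * C) →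
      ∃ D : Matrix (Fin 2) (Fin 2) B, M.map f = star D * D)
    (a b : A) :
    f (star b * a) * f (star a * b) ≤ ‖f (star a * a)‖ • f (star b * b) ∧
      f (star a * b) * f (star b * a) ≤ ‖f (star b * b)‖ • f (star a * a) ∧
      ‖f (star a * b)‖ ^ 2 ≤ ‖f (star a * a)‖ * ‖f (star b * b)‖ := by
  have hf : IsTwoPositive f := h2pos
  have h1 := hf.map_mul_map_le_norm_smul a b
  refine ⟨h1, hf.map_mul_map_le_norm_smul b a, ?_⟩
  have hself := hf.map_star_mul_eq_star_map a b
  have hnn : 0 ≤ f (star b * a) * f (star a * b) := hself ▸ star_mul_self_nonneg _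
  calc ‖f (star a * b)‖ ^ 2 = ‖f (star b * a) * f (star a * b)‖ := by
        rw [hself, CStarRing.norm_star_mul_self, sq]
    _ ≤ ‖‖f (star a * a)‖ • f (star b * b)‖ := CStarAlgebra.norm_le_norm_of_nonneg_of_le hnn h1
    _ = ‖f (star a * a)‖ * ‖f (star b * b)‖ := by rw [norm_smul, norm_norm]

/-- Cauchy–Schwarz for 2-positive maps: if `f : A → B` is a 2-positive linear map between
unital C*-algebras (positive 2×2 matrices over `A`, i.e. those of the form `C* C`, are sent
entrywise to positive 2×2 matrices over `B`), then for all `a b : A`: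
(1) `f(b* a) f(a* b) ≤ ‖f(a* a)‖ • f(b* b)`;
(2) `f(a* b) f(b* a) ≤ ‖f(b* b)‖ • f(a* a)`;
(3) `‖f(a* b)‖² ≤ ‖f(a* a)‖ ‖f(b* b)‖`. -/
theorem stmt_11 {A B : Type*} [CStarAlgebra A] [PartialOrder A] [StarOrderedRing A]
    [CStarAlgebra B] [PartialOrder B] [StarOrderedRing B]
    (f : A →ₗ[ℂ] B)
    (h2pos : ∀ M : Matrix (Fin 2) (Fin 2) A,
      (∃ C : Matrix (Fin 2) (Fin 2) A, M = star C * C) →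
      ∃ D : Matrix (Fin 2) (Fin 2) B, M.map f = star D * D)
    (a b : A) :
    f (star b * a) * f (star a * b) ≤ ‖f (star a * a)‖ • f (star b * b) ∧
      f (star a * b) * f (star b * a) ≤ ‖f (star b * b)‖ • f (star a * a) ∧
      ‖f (star a * b)‖ ^ 2 ≤ ‖f (star a * a)‖ * ‖f (star b * b)‖ :=
  stmt_11_general f h2pos a b
end

section
/- Let M be a von Neumann algebra on a complex Hilbert space H and let a ∈ M satisfy 0 ≤ a ≤ 1 (in the Loewner order on bounded operators). Then there exists a smallest projection above a in M: a projection e ∈ M with a ≤ e such that every projection q ∈ M with a ≤ q satisfies e ≤ q. -/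
/-!
The smallest projection above `a` is the range projection `e` of `a`, the orthogonal projection
onto the closure of the range of `a`. It lies in `M` because its range is invariant under the
commutant of `M`. Since `e * a = a = a * e`, conjugating `a ≤ 1` by `e` gives `a ≤ e`.
Conversely, a projection `q ≥ a ≥ 0` satisfies `q * a = a`, so the range of `q`, being closed,
contains the closure of the range of `a`, i.e. `e ≤ q`.
-/

theorem Module.End.range_mem_invtSubmodule_of_commute {R M : Type*} [Semiring R]
    [AddCommMonoid M] [Module R M] {f g : Module.End R M} (h : Commute f g) :
    LinearMap.range g ∈ f.invtSubmodule := by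
  rw [Module.End.mem_invtSubmodule_iff_forall_mem_of_mem]
  rintro _ ⟨x, rfl⟩
  exact ⟨f x, congr($h.symm x)⟩

theorem IsStarProjection.le_of_mul_eq_of_le_one {R : Type*} [Ring R] [PartialOrder R]
    [StarRing R] [StarOrderedRing R] {p a : R} (hp : IsStarProjection p) (ha : IsSelfAdjoint a)
    (hpa : p * a = a) (ha1 : a ≤ 1) : a ≤ p := by
  have hap : a * p = a := by
    simpa [ha.star_eq, hp.isSelfAdjoint.star_eq] using congr(star $hpa)
  calc a = star p * a * p := by rw [hp.isSelfAdjoint.star_eq, hpa, hap]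
    _ ≤ star p * 1 * p := star_left_conjugate_le_conjugate ha1 p
    _ = p := by rw [hp.isSelfAdjoint.star_eq, mul_one, hp.isIdempotentElem.eq]

namespace ContinuousLinearMap

variable {𝕜 E : Type*} [RCLike 𝕜] [NormedAddCommGroup E] [InnerProductSpace 𝕜 E]
  [CompleteSpace E]

noncomputable def rangeProjection (T : E →L[𝕜] E) : E →L[𝕜] E :=
  T.range.topologicalClosure.starProjection

theorem isStarProjection_rangeProjection (T : E →L[𝕜] E) :
    IsStarProjection T.rangeProjection :=
  isStarProjection_starProjection

theorem range_rangeProjection (T : E →L[𝕜] E) :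
    T.rangeProjection.range = T.range.topologicalClosure :=
  Submodule.range_starProjection _

theorem rangeProjection_mul_self (T : E →L[𝕜] E) : T.rangeProjection * T = T := by
  ext x
  exact Submodule.starProjection_eq_self_iff.mpr
    (Submodule.le_topologicalClosure _ (LinearMap.mem_range_self _ x))

theorem rangeProjection_le_of_mul_eq {T q : E →L[𝕜] E} (hq : IsStarProjection q)
    (hqT : q * T = T) : T.rangeProjection ≤ q := by
  obtain ⟨_, hq_eq⟩ := isStarProjection_iff_eq_starProjection_range.mp hq
  rw [hq_eq, rangeProjection, Submodule.starProjection_le_starProjection_iff]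
  refine Submodule.topologicalClosure_minimal _ ?_
    (IsIdempotentElem.isClosed_range hq.isIdempotentElem)
  rintro _ ⟨x, rfl⟩
  exact ⟨T x, congr($hqT x)⟩

end ContinuousLinearMap

theorem VonNeumannAlgebra.rangeProjection_mem {H : Type*} [NormedAddCommGroup H]
    [InnerProductSpace ℂ H] [CompleteSpace H] {M : VonNeumannAlgebra H} {a : H →L[ℂ] H}
    (ha : a ∈ M) : a.rangeProjection ∈ M := by
  refine (IsStarProjection.mem_iff a.isStarProjection_rangeProjection M).mpr fun y hy ↦ ?_
  rw [a.range_rangeProjection]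
  have hcomm : Commute y a := (mem_commutant_iff.mp hy a ha).symm
  exact Submodule.topologicalClosure_mem_invtSubmodule <|
    Module.End.range_mem_invtSubmodule_of_commute (hcomm.map ContinuousLinearMap.toLinearMapRingHom)

/-- For an element `a` of a von Neumann algebra `M` with `0 ≤ a ≤ 1` (Loewner order on
bounded operators), there is a smallest projection in `M` above `a`. -/
theorem stmt_13 {H : Type*} [NormedAddCommGroup H] [InnerProductSpace ℂ H] [CompleteSpace H]
    (M : VonNeumannAlgebra H) (a : H →L[ℂ] H) (haM : a ∈ M)
    (h0 : 0 ≤ a) (h1 : a ≤ 1) :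
    ∃ e : H →L[ℂ] H, e ∈ M ∧ IsSelfAdjoint e ∧ e * e = e ∧ a ≤ e ∧
      ∀ q : H →L[ℂ] H, q ∈ M → IsSelfAdjoint q → q * q = q → a ≤ q → e ≤ q := by
  have he := a.isStarProjection_rangeProjection
  refine ⟨a.rangeProjection, VonNeumannAlgebra.rangeProjection_mem haM, he.isSelfAdjoint,
    he.isIdempotentElem, he.le_of_mul_eq_of_le_one h0.isSelfAdjoint a.rangeProjection_mul_self h1,
    fun q _ hq_sa hq_idem haq ↦ ?_⟩
  have hq : IsStarProjection q := ⟨hq_idem, hq_sa⟩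
  exact ContinuousLinearMap.rangeProjection_le_of_mul_eq hq
    (hq.mul_right_and_mul_left_of_nonneg_of_le h0 haq).2
end
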